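/- Let V be a unital associative 𝔽-algebra. For an ℓ×ℓ matrix H = (H_{ij}) with entries H_{ij} ∈ V⊗V and F = (F₁,…,F_ℓ) ∈ V^ℓ, define (HF)_i := Σ_{j=1}^{ℓ} H_{ij}′ F_j H_{ij}″ (Sweedler notation). Call H skewadjoint if (H_{ji})^σ = −H_{ij} for all i,j. Let H₀ and H₁ be skewadjoint matrices and let F⁰, F¹, …, F^N ∈ V^ℓ satisfy H₀F^{n+1} = H₁F^n for n = 0,…,N−1. Then for all n,m ∈ {0,…,N} and a ∈ {0,1}: Σ_{i=1}^{ℓ} F^n_i (H_a F^m)_i ∈ [V,V]. -/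

import Mathlib

open TensorProduct LinearMap

section DPA

variable (𝔽 : Type) [Field 𝔽] (V : Type) [Ring V] [Algebra 𝔽 V]

/-- The swap `(u ⊗ v)^σ = v ⊗ u` on `V ⊗ V`. -/
noncomputable abbrev swap2 : V ⊗[𝔽] V ≃ₗ[𝔽] V ⊗[𝔽] V := TensorProduct.comm 𝔽 V V

/-- The cyclic permutation `(u ⊗ v ⊗ w)^σ = w ⊗ u ⊗ v` on `V ⊗ V ⊗ V = (V ⊗ V) ⊗ V`. -/
noncomputable def sigma3 : (V ⊗[𝔽] V) ⊗[𝔽] V ≃ₗ[𝔽] (V ⊗[𝔽] V) ⊗[𝔽] V :=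
  (TensorProduct.comm 𝔽 (V ⊗[𝔽] V) V).trans (TensorProduct.assoc 𝔽 V V V).symm

/-- Left multiplication `a · (u ⊗ v) = (a*u) ⊗ v` (outer bimodule structure). -/
noncomputable def lact2 (a : V) : V ⊗[𝔽] V →ₗ[𝔽] V ⊗[𝔽] V :=
  LinearMap.rTensor V (LinearMap.mulLeft 𝔽 a)

/-- Right multiplication `(u ⊗ v) · c = u ⊗ (v*c)` (outer bimodule structure). -/
noncomputable def ract2 (c : V) : V ⊗[𝔽] V →ₗ[𝔽] V ⊗[𝔽] V :=
  LinearMap.lTensor V (LinearMap.mulRight 𝔽 c)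

/-- `(u ⊗ v) ⋆₁ b = (u*b) ⊗ v`. -/
noncomputable def star1r (b : V) : V ⊗[𝔽] V →ₗ[𝔽] V ⊗[𝔽] V :=
  LinearMap.rTensor V (LinearMap.mulRight 𝔽 b)

/-- `a ⋆₁ (u ⊗ v) = u ⊗ (a*v)`. -/
noncomputable def star1l (a : V) : V ⊗[𝔽] V →ₗ[𝔽] V ⊗[𝔽] V :=
  LinearMap.lTensor V (LinearMap.mulLeft 𝔽 a)

/-- The `•`-product on `V ⊗ V`:  `(u ⊗ v) • (x ⊗ y) = (u*x) ⊗ (y*v)`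
(the multiplication of `V ⊗ Vᵒᵖ`). -/
noncomputable def bullet : V ⊗[𝔽] V →ₗ[𝔽] V ⊗[𝔽] V →ₗ[𝔽] V ⊗[𝔽] V :=
  TensorProduct.lift
    (((TensorProduct.mapBilinear (RingHom.id 𝔽) V V V V).comp (LinearMap.mul 𝔽 V)).compl₂
      ((LinearMap.mul 𝔽 V).flip))

/-- A `2`-fold bracket on `V`: an `𝔽`-bilinear map `V × V → V ⊗ V` satisfying the two
Leibniz rules `{{a,bc}} = {{a,b}}·c + b·{{a,c}}` and `{{ab,c}} = {{a,c}} ⋆₁ b + a ⋆₁ {{b,c}}`. -/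
def IsDoubleBracket (Br : V →ₗ[𝔽] V →ₗ[𝔽] V ⊗[𝔽] V) : Prop :=
  (∀ a b c : V, Br a (b * c) = ract2 𝔽 V c (Br a b) + lact2 𝔽 V b (Br a c)) ∧
  (∀ a b c : V, Br (a * b) c = star1r 𝔽 V b (Br a c) + star1l 𝔽 V a (Br b c))

variable {𝔽 V}

/-- `{{a, B}}_L` : apply the bracket to the first tensor factor. -/
noncomputable def brL (Br : V →ₗ[𝔽] V →ₗ[𝔽] V ⊗[𝔽] V) (a : V) :
    V ⊗[𝔽] V →ₗ[𝔽] (V ⊗[𝔽] V) ⊗[𝔽] V :=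
  LinearMap.rTensor V (Br a)

/-- `{{a, B}}_R` : apply the bracket to the second tensor factor. -/
noncomputable def brR (Br : V →ₗ[𝔽] V →ₗ[𝔽] V ⊗[𝔽] V) (a : V) :
    V ⊗[𝔽] V →ₗ[𝔽] (V ⊗[𝔽] V) ⊗[𝔽] V :=
  (TensorProduct.assoc 𝔽 V V V).symm.toLinearMap ∘ₗ LinearMap.lTensor V (Br a)

variable (𝔽 V)

/-- `ρ₂` : swap the last two tensor factors of `V ⊗ V ⊗ V`. -/
noncomputable def rho2 : (V ⊗[𝔽] V) ⊗[𝔽] V ≃ₗ[𝔽] (V ⊗[𝔽] V) ⊗[𝔽] V :=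
  (TensorProduct.assoc 𝔽 V V V).trans
    ((TensorProduct.congr (LinearEquiv.refl 𝔽 V) (TensorProduct.comm 𝔽 V V)).trans
      (TensorProduct.assoc 𝔽 V V V).symm)

variable {𝔽 V}

/-- Conjugated bullet action used to define the actions `•ᵢ` of `V ⊗ V` on `V ⊗ V ⊗ V`. -/
noncomputable def conjAct (β : V ⊗[𝔽] V →ₗ[𝔽] V ⊗[𝔽] V →ₗ[𝔽] V ⊗[𝔽] V)
    (ρ : (V ⊗[𝔽] V) ⊗[𝔽] V ≃ₗ[𝔽] (V ⊗[𝔽] V) ⊗[𝔽] V) :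
    V ⊗[𝔽] V →ₗ[𝔽] (V ⊗[𝔽] V) ⊗[𝔽] V →ₗ[𝔽] (V ⊗[𝔽] V) ⊗[𝔽] V :=
  (LinearMap.lcomp 𝔽 _ ρ.toLinearMap) ∘ₗ
    (LinearMap.llcomp 𝔽 ((V ⊗[𝔽] V) ⊗[𝔽] V) ((V ⊗[𝔽] V) ⊗[𝔽] V) ((V ⊗[𝔽] V) ⊗[𝔽] V)
      ρ.symm.toLinearMap) ∘ₗ
    (LinearMap.rTensorHom V) ∘ₗ β

variable (𝔽 V)

/-- The right action `X •₁ A`, i.e. `(x⊗y⊗z) •₁ (a⊗b) = x⊗(y*a)⊗(b*z)`;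
`bAct1R A X = X •₁ A`. -/
noncomputable def bAct1R : V ⊗[𝔽] V →ₗ[𝔽] (V ⊗[𝔽] V) ⊗[𝔽] V →ₗ[𝔽] (V ⊗[𝔽] V) ⊗[𝔽] V :=
  conjAct (bullet 𝔽 V).flip ((sigma3 𝔽 V).trans (sigma3 𝔽 V))

/-- The left action `A •₂ X`, i.e. `(a⊗b) •₂ (x⊗y⊗z) = (a*x)⊗y⊗(z*b)`. -/
noncomputable def bAct2L : V ⊗[𝔽] V →ₗ[𝔽] (V ⊗[𝔽] V) ⊗[𝔽] V →ₗ[𝔽] (V ⊗[𝔽] V) ⊗[𝔽] V :=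
  conjAct (bullet 𝔽 V) (rho2 𝔽 V)

/-- The right action `X •₃ A`, i.e. `(x⊗y⊗z) •₃ (a⊗b) = (x*a)⊗(b*y)⊗z`;
`bAct3R A X = X •₃ A`. -/
noncomputable def bAct3R : V ⊗[𝔽] V →ₗ[𝔽] (V ⊗[𝔽] V) ⊗[𝔽] V →ₗ[𝔽] (V ⊗[𝔽] V) ⊗[𝔽] V :=
  conjAct (bullet 𝔽 V).flip (LinearEquiv.refl 𝔽 ((V ⊗[𝔽] V) ⊗[𝔽] V))

/-- `a ⋆₁ (x⊗y⊗z) = x⊗(a*y)⊗z`. -/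
noncomputable def slot2L (a : V) : (V ⊗[𝔽] V) ⊗[𝔽] V →ₗ[𝔽] (V ⊗[𝔽] V) ⊗[𝔽] V :=
  LinearMap.rTensor V (LinearMap.lTensor V (LinearMap.mulLeft 𝔽 a))

/-- `(x⊗y⊗z) ⋆₁ b = x⊗(y*b)⊗z`. -/
noncomputable def slot2R (b : V) : (V ⊗[𝔽] V) ⊗[𝔽] V →ₗ[𝔽] (V ⊗[𝔽] V) ⊗[𝔽] V :=
  LinearMap.rTensor V (LinearMap.lTensor V (LinearMap.mulRight 𝔽 b))

/-- `a ⋆₂ (x⊗y⊗z) = x⊗y⊗(a*z)`. -/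
noncomputable def slot3L (a : V) : (V ⊗[𝔽] V) ⊗[𝔽] V →ₗ[𝔽] (V ⊗[𝔽] V) ⊗[𝔽] V :=
  LinearMap.lTensor (V ⊗[𝔽] V) (LinearMap.mulLeft 𝔽 a)

/-- `(x⊗y⊗z) ⋆₂ b = (x*b)⊗y⊗z`. -/
noncomputable def slot1R (b : V) : (V ⊗[𝔽] V) ⊗[𝔽] V →ₗ[𝔽] (V ⊗[𝔽] V) ⊗[𝔽] V :=
  LinearMap.rTensor V (LinearMap.rTensor V (LinearMap.mulRight 𝔽 b))

/-- outer left: `a · (x⊗y⊗z) = (a*x)⊗y⊗z`. -/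
noncomputable def slot1L (a : V) : (V ⊗[𝔽] V) ⊗[𝔽] V →ₗ[𝔽] (V ⊗[𝔽] V) ⊗[𝔽] V :=
  LinearMap.rTensor V (LinearMap.rTensor V (LinearMap.mulLeft 𝔽 a))

/-- outer right: `(x⊗y⊗z) · b = x⊗y⊗(z*b)`. -/
noncomputable def slot3R (b : V) : (V ⊗[𝔽] V) ⊗[𝔽] V →ₗ[𝔽] (V ⊗[𝔽] V) ⊗[𝔽] V :=
  LinearMap.lTensor (V ⊗[𝔽] V) (LinearMap.mulRight 𝔽 b)

variable {𝔽 V}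

/-- The triple bracket `{{a,b,c}}`. -/
noncomputable def triple (Br : V →ₗ[𝔽] V →ₗ[𝔽] V ⊗[𝔽] V) (a b c : V) :
    (V ⊗[𝔽] V) ⊗[𝔽] V :=
  brL Br a (Br b c) + sigma3 𝔽 V (brL Br b (Br c a)) +
    sigma3 𝔽 V (sigma3 𝔽 V (brL Br c (Br a b)))

variable (𝔽 V)

/-- Skewsymmetry of a 2-fold bracket. -/
def IsSkew (Br : V →ₗ[𝔽] V →ₗ[𝔽] V ⊗[𝔽] V) : Prop :=
  ∀ a b : V, Br a b = - swap2 𝔽 V (Br b a)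

/-- The span of commutators `[V,V]`. -/
def commSub : Submodule 𝔽 V := Submodule.span 𝔽 {x : V | ∃ a b : V, x = a * b - b * a}

variable {𝔽 V}

/-- The associated bracket `{a,b} = m {{a,b}}`. -/
noncomputable def sb (Br : V →ₗ[𝔽] V →ₗ[𝔽] V ⊗[𝔽] V) (a b : V) : V :=
  LinearMap.mul' 𝔽 V (Br a b)

/-- A 2-fold derivation: `D(ab) = (Da)·b + a·(Db)`. -/
def Is2Deriv (D : V →ₗ[𝔽] V ⊗[𝔽] V) : Prop :=
  ∀ a b : V, D (a * b) = ract2 𝔽 V b (D a) + lact2 𝔽 V a (D b)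

/-- `D` and `E` strongly commute: `D_L ∘ E = E_R ∘ D`. -/
def StronglyComm (D E : V →ₗ[𝔽] V ⊗[𝔽] V) : Prop :=
  ∀ f : V, LinearMap.rTensor V D (E f) =
    (TensorProduct.assoc 𝔽 V V V).symm (LinearMap.lTensor V E (D f))


/-- `midMul p (u ⊗ v) = u * p * v`. -/
noncomputable def midMul (𝔽 : Type) [Field 𝔽] (V : Type) [Ring V] [Algebra 𝔽 V]
    (p : V) : V ⊗[𝔽] V →ₗ[𝔽] V :=
  (LinearMap.mul' 𝔽 V) ∘ₗ LinearMap.rTensor V (LinearMap.mulRight 𝔽 p)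

/-- `(HF)_i = Σ_j H_{ij}′ F_j H_{ij}″`. -/
noncomputable def actH (𝔽 : Type) [Field 𝔽] (V : Type) [Ring V] [Algebra 𝔽 V]
    {ℓ : ℕ} (H : Fin ℓ → Fin ℓ → V ⊗[𝔽] V) (F : Fin ℓ → V) (i : Fin ℓ) : V :=
  ∑ j : Fin ℓ, midMul 𝔽 V (F j) (H i j)

/-!
Reduce everything modulo `[V,V]`: for a skewadjoint `H` the pairing `⟨F, H G⟩ = Σᵢ Fᵢ (H G)ᵢ`
is then antisymmetric, by cyclicity of the trace `V → V/[V,V]`, and hence (in characteristic `0`)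
vanishes on the diagonal. The Lenard–Magri relation `H₀ Fⁿ⁺¹ = H₁ Fⁿ` turns `⟨Fⁿ, H₀ Fᵐ⁺¹⟩` into
`⟨Fⁿ, H₁ Fᵐ⟩ = -⟨Fᵐ, H₁ Fⁿ⟩ = -⟨Fᵐ, H₀ Fⁿ⁺¹⟩ = ⟨Fⁿ⁺¹, H₀ Fᵐ⟩`, so `⟨Fⁿ, H₀ Fᵐ⟩` only depends on
`n + m` and can be moved to the diagonal `⟨Fᵏ, H₀ Fᵏ⟩ = 0` or next to it,
`⟨Fᵏ, H₀ Fᵏ⁺¹⟩ = ⟨Fᵏ, H₁ Fᵏ⟩ = 0`.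
-/

section LenardMagri

variable {M : Type*} [AddCommGroup M] {N : ℕ} {S₀ S₁ : ℕ → ℕ → M}

theorem lenardMagri_shift (anti₀ : ∀ n m, S₀ n m = -S₀ m n) (anti₁ : ∀ n m, S₁ n m = -S₁ m n)
    (shift : ∀ n, ∀ m < N, S₀ n (m + 1) = S₁ n m) {n m : ℕ} (hn : n < N) (hm : m < N) :
    S₀ n (m + 1) = S₀ (n + 1) m := by
  rw [shift n m hm, anti₁, ← shift m n hn, anti₀, neg_neg]

variable [IsAddTorsionFree M]

theorem lenardMagri_zero_add_eq_zero (anti₀ : ∀ n m, S₀ n m = -S₀ m n)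
    (anti₁ : ∀ n m, S₁ n m = -S₁ m n)
    (shift : ∀ n, ∀ m < N, S₀ n (m + 1) = S₁ n m) (k : ℕ) {n : ℕ} (hk : n + k ≤ N) :
    S₀ n (n + k) = 0 := by
  induction k using Nat.twoStepInduction generalizing n with
  | zero => exact self_eq_neg.mp (anti₀ n n)
  | one => rw [shift n n hk]; exact self_eq_neg.mp (anti₁ n n)
  | more k ih _ =>
    rw [show n + (k + 2) = n + k + 1 + 1 by omega,
      lenardMagri_shift anti₀ anti₁ shift (by omega) (by omega), show n + k + 1 = n + 1 + k by omega]
    exact ih (by omega)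

theorem lenardMagri_zero_eq_zero (anti₀ : ∀ n m, S₀ n m = -S₀ m n)
    (anti₁ : ∀ n m, S₁ n m = -S₁ m n)
    (shift : ∀ n, ∀ m < N, S₀ n (m + 1) = S₁ n m) {n m : ℕ} (hn : n ≤ N) (hm : m ≤ N) :
    S₀ n m = 0 := by
  have h₀ := fun {n} k => lenardMagri_zero_add_eq_zero anti₀ anti₁ shift k (n := n)
  rcases le_total n m with h | h
  · obtain ⟨k, rfl⟩ := Nat.exists_eq_add_of_le h
    exact h₀ k hm
  · obtain ⟨k, rfl⟩ := Nat.exists_eq_add_of_le h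
    rw [anti₀, h₀ k hn, neg_zero]

theorem lenardMagri_one_eq_zero (anti₀ : ∀ n m, S₀ n m = -S₀ m n)
    (anti₁ : ∀ n m, S₁ n m = -S₁ m n)
    (shift : ∀ n, ∀ m < N, S₀ n (m + 1) = S₁ n m) {n m : ℕ} (hn : n ≤ N) (hm : m ≤ N) :
    S₁ n m = 0 := by
  have h₀ := fun {n m} => lenardMagri_zero_eq_zero anti₀ anti₁ shift (n := n) (m := m)
  rcases hm.lt_or_eq with hm | rfl
  · rw [← shift n m hm]; exact h₀ hn hm
  rcases hn.lt_or_eq with hn | rfl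
  · rw [anti₁, ← shift _ n hn, h₀ le_rfl hn, neg_zero]
  · exact self_eq_neg.mp (anti₁ n n)

end LenardMagri

section TracePairing

variable {𝔽 : Type} [Field 𝔽] {V : Type} [Ring V] [Algebra 𝔽 V]

theorem commSub_mk_mul_comm (a b : V) :
    (Submodule.Quotient.mk (a * b) : V ⧸ commSub 𝔽 V) = Submodule.Quotient.mk (b * a) :=
  (Submodule.Quotient.eq _).mpr (Submodule.subset_span ⟨a, b, rfl⟩)

theorem commSub_mk_mul_midMul (f g : V) (x : V ⊗[𝔽] V) :
    (Submodule.Quotient.mk (f * midMul 𝔽 V g x) : V ⧸ commSub 𝔽 V) =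
      Submodule.Quotient.mk (g * midMul 𝔽 V f (swap2 𝔽 V x)) := by
  induction x using TensorProduct.induction_on with
  | zero => simp
  | tmul u v =>
    simp only [midMul, LinearMap.coe_comp, Function.comp_apply, LinearMap.rTensor_tmul,
      LinearMap.mulRight_apply, LinearMap.mul'_apply, TensorProduct.comm_tmul]
    calc (Submodule.Quotient.mk (f * (u * g * v)) : V ⧸ commSub 𝔽 V)
        = Submodule.Quotient.mk (f * u * g * v) := by rw [← mul_assoc, ← mul_assoc]
      _ = Submodule.Quotient.mk (v * (f * u * g)) := commSub_mk_mul_comm _ _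
      _ = Submodule.Quotient.mk (v * f * u * g) := by simp only [mul_assoc]
      _ = Submodule.Quotient.mk (g * (v * f * u)) := commSub_mk_mul_comm _ _
  | add x y hx hy =>
    simp only [map_add, mul_add, Submodule.Quotient.mk_add, hx, hy]

noncomputable def tracePairing {ℓ : ℕ} (H : Fin ℓ → Fin ℓ → V ⊗[𝔽] V) (F G : Fin ℓ → V) :
    V ⧸ commSub 𝔽 V :=
  (commSub 𝔽 V).mkQ (∑ i, F i * actH 𝔽 V H G i)

theorem tracePairing_swap {ℓ : ℕ} {H : Fin ℓ → Fin ℓ → V ⊗[𝔽] V}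
    (hskew : ∀ i j, swap2 𝔽 V (H j i) = -H i j) (F G : Fin ℓ → V) :
    tracePairing H F G = -tracePairing H G F := by
  simp only [tracePairing, actH, Finset.mul_sum, map_sum, ← Finset.sum_neg_distrib]
  rw [Finset.sum_comm]
  refine Finset.sum_congr rfl fun j _ => Finset.sum_congr rfl fun i _ => ?_
  rw [Submodule.mkQ_apply, commSub_mk_mul_midMul, hskew, map_neg, mul_neg,
    Submodule.Quotient.mk_neg, Submodule.mkQ_apply]

end TracePairing

/-- Lenard-Magri orthogonality relations. For skewadjoint matrices
`H₀, H₁` and a Lenard-Magri sequence `F⁰,…,F^N`, all inner products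
`Σ_i F^n_i (H_a F^m)_i` lie in `[V,V]`. -/
theorem statement_14 (𝔽 : Type) [Field 𝔽] [CharZero 𝔽] (V : Type) [Ring V] [Algebra 𝔽 V]
    {ℓ : ℕ} (H0 H1 : Fin ℓ → Fin ℓ → V ⊗[𝔽] V)
    (hskew0 : ∀ i j, swap2 𝔽 V (H0 j i) = - H0 i j)
    (hskew1 : ∀ i j, swap2 𝔽 V (H1 j i) = - H1 i j)
    (N : ℕ) (F : ℕ → Fin ℓ → V)
    (hrec : ∀ n < N, ∀ i, actH 𝔽 V H0 (F (n + 1)) i = actH 𝔽 V H1 (F n) i) :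
    ∀ n ≤ N, ∀ m ≤ N,
      (∑ i : Fin ℓ, F n i * actH 𝔽 V H0 (F m) i) ∈ commSub 𝔽 V ∧
      (∑ i : Fin ℓ, F n i * actH 𝔽 V H1 (F m) i) ∈ commSub 𝔽 V := by
  intro n hn m hm
  have : IsAddTorsionFree (V ⧸ commSub 𝔽 V) := .of_isTorsionFree 𝔽 _
  have anti₀ := fun n m => tracePairing_swap hskew0 (F n) (F m)
  have anti₁ := fun n m => tracePairing_swap hskew1 (F n) (F m)
  have shift : ∀ n, ∀ m < N, tracePairing H0 (F n) (F (m + 1)) = tracePairing H1 (F n) (F m) :=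
    fun n m hm => by simp only [tracePairing, hrec m hm]
  exact ⟨(Submodule.Quotient.mk_eq_zero _).mp (lenardMagri_zero_eq_zero anti₀ anti₁ shift hn hm),
    (Submodule.Quotient.mk_eq_zero _).mp (lenardMagri_one_eq_zero anti₀ anti₁ shift hn hm)⟩
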